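/- In the ETH reduction program P_φ, in any sequentially consistent interleaving with 0 preemptions, for each variable x_i at most one of the two assignment threads S_i^0, S_i^1 appears before the final thread S_f. -/

import Mathlib

/-- Memory events: reads and writes of natural-number values to variables of type `V`. -/
inductive Event (V : Type) where
  | read  (x : V) (d : ℕ)
  | write (x : V) (d : ℕ)
deriving DecidableEq

variable {V ι : Type}

/-- A sequence of events is sequentially consistent (SC): every read `r(x,d)` has a
preceding write `w(x,d)` with no write of a different value to `x` in between. -/
def SC (σ : List (Event V)) : Prop :=
  ∀ (p : ℕ) x d, σ[p]? = some (Event.read x d) →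
    ∃ q : ℕ, q < p ∧ σ[q]? = some (Event.write x d) ∧
      ∀ r, q < r → r < p → ∀ d', d' ≠ d → σ[r]? ≠ some (Event.write x d')

/-- `σ` is an interleaving of the given threads: its restriction to each
thread identifier equals that thread's event sequence. -/
def IsInterleaving [DecidableEq ι] (threads : ι → List (Event V)) (σ : List (ι × Event V)) : Prop :=
  ∀ i, σ.filterMap (fun a => if a.1 = i then some a.2 else none) = threads i

/-- A preemption occurs at position `j`: the events at `j` and `j+1` are from
different threads and the event at `j` is not the last event of its thread. -/
def PreemptionAt (σ : List (ι × Event V)) (j : ℕ) : Prop :=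
  ∃ a b, σ[j]? = some a ∧ σ[j + 1]? = some b ∧ a.1 ≠ b.1 ∧
    ∃ r c, j < r ∧ σ[r]? = some c ∧ c.1 = a.1

open Classical in
/-- The number of preemption positions of `σ`. -/
noncomputable def numPreemptions (σ : List (ι × Event V)) : ℕ :=
  ((Finset.range σ.length).filter fun j => PreemptionAt σ j).card

open Classical in
/-- The number of context switches of `σ` (adjacent events of different threads). -/
noncomputable def numSwitches (σ : List (ι × Event V)) : ℕ :=
  ((Finset.range σ.length).filter fun j =>
    ∃ a b, σ[j]? = some a ∧ σ[j + 1]? = some b ∧ a.1 ≠ b.1).card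

/-- The (increasing) list of positions of `σ` carrying events of thread `i`. -/
def threadPositions [DecidableEq ι] (σ : List (ι × Event V)) (i : ι) : List ℕ :=
  (List.range σ.length).filter fun p => decide ((σ[p]?).map Prod.fst = some i)

/-- The position in `σ` of the `j`-th event of thread `i`. -/
def posOf [DecidableEq ι] (σ : List (ι × Event V)) (i : ι) (j : ℕ) : ℕ :=
  (threadPositions σ i).getD j 0

/-- All events of thread `t` occur before all events of thread `t'` in `σ`. -/
def ThreadBefore [DecidableEq ι] (σ : List (ι × Event V)) (t t' : ι) : Prop :=
  ∀ p ∈ threadPositions σ t, ∀ q ∈ threadPositions σ t', p < q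

/-- The event is a write to variable `x`. -/
def writesTo (x : V) : Event V → Prop
  | Event.write y _ => y = x
  | _ => False

/-- A 1-writer program: for each variable, a single thread performs all writes to it. -/
def OneWriter (threads : ι → List (Event V)) : Prop :=
  ∀ x i i', (∃ e ∈ threads i, writesTo x e) → (∃ e ∈ threads i', writesTo x e) → i = i'

/-- The events of thread `i` from its index `s` onwards appear contiguously in `σ`. -/
def ContiguousFrom [DecidableEq ι] (σ : List (ι × Event V)) (i : ι) (s : ℕ) : Prop :=
  ∀ j, s ≤ j → j + 1 < (threadPositions σ i).length → posOf σ i (j + 1) = posOf σ i j + 1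

/-- Conflict-graph edge `tr → tw` between outer blocks (suffixes of the threads
starting at indices `s tr`, `s tw`): the last write to some variable `x` in the
outer block of `tw` conflicts with a read of `x` in the outer block of `tr`. -/
def ConflictEdge [DecidableEq ι] (threads : ι → List (Event V)) (s : ι → ℕ) (tr tw : ι) : Prop :=
  tr ≠ tw ∧ ∃ x d d' jr jw, d ≠ d' ∧
    s tr ≤ jr ∧ (threads tr)[jr]? = some (Event.read x d) ∧
    s tw ≤ jw ∧ (threads tw)[jw]? = some (Event.write x d') ∧
    ∀ j d'', jw < j → (threads tw)[j]? ≠ some (Event.write x d'')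

/-- Splitting a list into contiguous blocks immediately after each position in `cut`. -/
def splitAtCuts {α : Type} (l : List α) (cut : Finset ℕ) : List (List α) :=
  let cs := cut.sort (· ≤ ·)
  ((0 :: cs.map (· + 1)).zip (cs.map (· + 1) ++ [l.length])).map fun p => (l.take p.2).drop p.1


/-- Variables of the ETH 3-writer reduction: `v i` per program variable, `c j` per
clause, and the distinguished variable `x`. -/
inductive PVar (K m : ℕ) where
  | v (i : Fin K)
  | c (j : Fin m)
  | x
deriving DecidableEq

/-- Thread identifiers of the ETH 3-writer reduction. -/
inductive TId (K : ℕ) where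
  | assign (i : Fin K) (b : Bool)
  | lit (i : Fin K) (b : Bool)
  | final
  | helper (i : Fin K) (b : Bool)
deriving DecidableEq

/-- Boolean as a value. -/
def bval (b : Bool) : ℕ := if b then 1 else 0

/-- The threads of the program `P_φ` of the ETH 3-writer reduction, for a 3-CNF given
by `clauses : Fin m → Fin 3 → Fin K × Bool` (literal = variable index and polarity). -/
def phiThreads {K m : ℕ} (clauses : Fin m → Fin 3 → Fin K × Bool) :
    TId K → List (Event (PVar K m))
  | TId.assign i b => [Event.write (PVar.v i) (bval b)]
  | TId.lit i b => (List.finRange m).filterMap fun j =>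
      if ∃ t : Fin 3, clauses j t = (i, b) then some (Event.write (PVar.c j) 1) else none
  | TId.final => ((List.finRange m).map fun j => Event.read (PVar.c j) 1)
      ++ [Event.write PVar.x 1]
  | TId.helper i b => [Event.read PVar.x 1, Event.read (PVar.v i) (bval b)]

/-!
The helper thread `H_i^b` first reads `x = 1`, whose only writer is `S_f`, and then reads
`v_i = b`, whose only writer is `S_i^b`. If both `S_i^0` and `S_i^1` ran before `S_f`, each
assignment would precede the other helper's read of `v_i`; the later of the two assignments
then overwrites `v_i` between the earlier one and the read that earlier one must serve,
which violates sequential consistency.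
-/

open scoped List

theorem List.exists_lt_of_pair_sublist {α : Type*} {a b : α} {l : List α} (h : [a, b] <+ l) :
    ∃ p q : ℕ, p < q ∧ l[p]? = some a ∧ l[q]? = some b := by
  obtain ⟨f, hf⟩ := List.sublist_iff_exists_orderEmbedding_getElem?_eq.mp h
  exact ⟨f 0, f 1, f.strictMono zero_lt_one, (hf 0).symm, (hf 1).symm⟩

theorem List.map_prodMk_filterMap_sublist {α β : Type*} [DecidableEq α] (l : List (α × β))
    (a : α) : (l.filterMap fun x => if x.1 = a then some x.2 else none).map (Prod.mk a) <+ l := by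
  induction l with
  | nil => simp
  | cons x l ih =>
    obtain ⟨a', b⟩ := x
    by_cases ha : a' = a
    · subst ha
      simpa using ih.cons_cons (a', b)
    · simpa [ha] using ih.cons _

theorem mem_threadPositions_of_getElem? [DecidableEq ι] {σ : List (ι × Event V)} {p : ℕ}
    {t : ι} {e : Event V} (h : σ[p]? = some (t, e)) : p ∈ threadPositions σ t := by
  refine List.mem_filter.mpr ⟨List.mem_range.mpr (List.getElem?_eq_some_iff.mp h).1, ?_⟩
  simp [h]

namespace IsInterleaving

variable [DecidableEq ι] {threads : ι → List (Event V)} {σ : List (ι × Event V)}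

theorem map_sublist (hσ : IsInterleaving threads σ) {t : ι} {l : List (Event V)}
    (h : l <+ threads t) : l.map (Prod.mk t) <+ σ := by
  rw [← hσ t] at h
  exact (h.map _).trans (List.map_prodMk_filterMap_sublist σ t)

theorem mem_of_getElem? (hσ : IsInterleaving threads σ) {p : ℕ} {t : ι} {e : Event V}
    (h : σ[p]? = some (t, e)) : e ∈ threads t := by
  rw [← hσ t]
  exact List.mem_filterMap.mpr ⟨(t, e), List.mem_of_getElem? h, by simp⟩

theorem exists_thread_of_getElem?_map (hσ : IsInterleaving threads σ) {p : ℕ} {e : Event V}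
    (h : (σ.map Prod.snd)[p]? = some e) :
    ∃ t, p ∈ threadPositions σ t ∧ e ∈ threads t := by
  rw [List.getElem?_map, Option.map_eq_some_iff] at h
  obtain ⟨⟨t, e⟩, hp, rfl⟩ := h
  exact ⟨t, mem_threadPositions_of_getElem? hp, hσ.mem_of_getElem? hp⟩

end IsInterleaving

structure IsSource (σ : List (Event V)) (q p : ℕ) (y : V) (d : ℕ) : Prop where
  lt : q < p
  write : σ[q]? = some (Event.write y d)
  not_overwritten : ∀ r, q < r → r < p → ∀ d', d' ≠ d → σ[r]? ≠ some (Event.write y d')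

theorem SC.exists_source {σ : List (Event V)} (hsc : SC σ) {p : ℕ} {y : V} {d : ℕ}
    (h : σ[p]? = some (Event.read y d)) : ∃ q, IsSource σ q p y d :=
  let ⟨q, hqp, hw, hno⟩ := hsc p y d h
  ⟨q, hqp, hw, hno⟩

theorem IsSource.eq_of_write {σ : List (Event V)} {q p q' : ℕ} {y : V} {d d' : ℕ}
    (hs : IsSource σ q p y d) (hq : q ≤ q') (hq' : q' < p)
    (hw : σ[q']? = some (Event.write y d')) : d' = d := by
  rcases hq.lt_or_eq with hlt | rfl
  · by_contra hne
    exact hs.not_overwritten q' hlt hq' d' hne hw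
  · simpa [hs.write, eq_comm] using hw

section PhiThreads

variable {K m : ℕ} {clauses : Fin m → Fin 3 → Fin K × Bool}

theorem eq_final_of_write_x_mem_phiThreads {t : TId K} {d : ℕ}
    (h : Event.write PVar.x d ∈ phiThreads clauses t) : t = TId.final := by
  cases t <;> simp_all [phiThreads]

theorem eq_assign_of_write_v_mem_phiThreads {t : TId K} {i : Fin K} {b : Bool}
    (h : Event.write (PVar.v i) (bval b) ∈ phiThreads clauses t) : t = TId.assign i b := by
  cases t <;> cases b <;> simp_all [phiThreads, bval]

theorem exists_source_of_helper_read {σ : List (TId K × Event (PVar K m))}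
    (hσ : IsInterleaving (phiThreads clauses) σ) (hsc : SC (σ.map Prod.snd)) (i : Fin K)
    (b : Bool) :
    ∃ qx qw r, qx ∈ threadPositions σ TId.final ∧ qw ∈ threadPositions σ (TId.assign i b) ∧
      qx < r ∧ IsSource (σ.map Prod.snd) qw r (PVar.v i) (bval b) := by
  have hhelper : [(TId.helper i b, Event.read PVar.x 1),
      (TId.helper i b, Event.read (PVar.v i) (bval b))] <+ σ :=
    hσ.map_sublist (t := TId.helper i b) (List.Sublist.refl _)
  obtain ⟨p, r, hpr, hp, hr⟩ := List.exists_lt_of_pair_sublist hhelper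
  obtain ⟨qx, hqx⟩ := hsc.exists_source (p := p) (y := PVar.x) (d := 1) (by simp [hp])
  obtain ⟨qw, hqw⟩ := hsc.exists_source (p := r) (y := PVar.v i) (d := bval b)
    (by simp [hr])
  obtain ⟨tx, hqx_pos, hx_mem⟩ := hσ.exists_thread_of_getElem?_map hqx.write
  obtain ⟨tw, hqw_pos, hw_mem⟩ := hσ.exists_thread_of_getElem?_map hqw.write
  rw [eq_final_of_write_x_mem_phiThreads hx_mem] at hqx_pos
  rw [eq_assign_of_write_v_mem_phiThreads hw_mem] at hqw_pos
  exact ⟨qx, qw, r, hqx_pos, hqw_pos, hqx.lt.trans hpr, hqw⟩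

end PhiThreads

theorem stmt9_general (K m : ℕ) (clauses : Fin m → Fin 3 → Fin K × Bool)
    (σ : List (TId K × Event (PVar K m)))
    (hσ : IsInterleaving (phiThreads clauses) σ)
    (hsc : SC (σ.map Prod.snd))
    (i : Fin K) :
    ¬ (ThreadBefore σ (TId.assign i false) TId.final ∧
       ThreadBefore σ (TId.assign i true) TId.final) := by
  rintro ⟨hfalse, htrue⟩
  obtain ⟨xf, wf, rf, hxf, hwf, hxrf, hsf⟩ := exists_source_of_helper_read hσ hsc i false
  obtain ⟨xt, wt, rt, hxt, hwt, hxrt, hst⟩ := exists_source_of_helper_read hσ hsc i true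
  have hwf_rt : wf < rt := (hfalse wf hwf xt hxt).trans hxrt
  have hwt_rf : wt < rf := (htrue wt hwt xf hxf).trans hxrf
  rcases le_total wf wt with h | h
  · exact absurd (hsf.eq_of_write h hwt_rf hst.write) (by simp [bval])
  · exact absurd (hst.eq_of_write h hwf_rt hsf.write) (by simp [bval])

/-- in any SC interleaving of `P_φ` with 0 preemptions, for each
variable `x_i` at most one of the assignment threads `S_i^0`, `S_i^1` appears
before the final thread `S_f`. -/
theorem stmt9 (K m : ℕ) (clauses : Fin m → Fin 3 → Fin K × Bool)
    (σ : List (TId K × Event (PVar K m)))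
    (hσ : IsInterleaving (phiThreads clauses) σ)
    (hsc : SC (σ.map Prod.snd))
    (h0 : numPreemptions σ = 0) (i : Fin K) :
    ¬ (ThreadBefore σ (TId.assign i false) TId.final ∧
       ThreadBefore σ (TId.assign i true) TId.final) :=
  stmt9_general K m clauses σ hσ hsc i
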